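/- arXiv:1507.02502 — 2 statements merged into one kernel-verified Lean document; each statement's English description precedes it below -/
import Mathlib

section
/- For every j ≥ 1 the coefficients of the polynomials g_j satisfy: (i) c^{j+1}_{k+1} = (k−1)·c^j_{k−1} + c^j_k for all k with j+1 ≤ k ≤ 2j−1; (ii) c^{j+1}_{2j+1} = (2j−1)·c^j_{2j−1}; and (iii) 2j·c^{j+1}_{k+1} = (k−1)·k·c^j_{k−1} + 2k·c^j_k for all k with j+1 ≤ k ≤ 2j−1. -/
open Polynomial

/-- The polynomials `g_j`, defined by `g_0 = 1` and `g_{j+1}(t) = t³ g_j'(t) + t g_j(t)`. -/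
noncomputable def g : ℕ → Polynomial ℤ
  | 0 => 1
  | j + 1 => X ^ 3 * derivative (g j) + X * g j

lemma g_succ (j : ℕ) : g (j + 1) = X ^ 3 * derivative (g j) + X * g j := rfl

lemma coeff_X3_mul (p : Polynomial ℤ) (n : ℕ) :
    (X ^ 3 * p).coeff n = if 3 ≤ n then p.coeff (n - 3) else 0 := by
  rw [mul_comm]; exact coeff_mul_X_pow' p 3 n

lemma coeff_X_mul' (p : Polynomial ℤ) (n : ℕ) :
    (X * p).coeff n = if 1 ≤ n then p.coeff (n - 1) else 0 := by
  rw [mul_comm, ← pow_one (X : Polynomial ℤ)]; exact coeff_mul_X_pow' p 1 n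

lemma g_rec (j m : ℕ) (hm : 2 ≤ m) :
    (g (j + 1)).coeff m = ((m : ℤ) - 2) * (g j).coeff (m - 2) + (g j).coeff (m - 1) := by
  rw [g_succ, coeff_add, coeff_X3_mul, coeff_X_mul']
  rcases Nat.lt_or_ge m 3 with h3 | h3
  · have hm2 : m = 2 := by omega
    subst hm2
    simp
  · rw [if_pos h3, if_pos (by omega), coeff_derivative]
    have h4 : ((m - 3 : ℕ) : ℤ) = (m : ℤ) - 3 := by omega
    have h5 : m - 3 + 1 = m - 2 := by omega
    rw [h5, h4]; ring

lemma g_coeff_lt (j : ℕ) : ∀ k, k < j → (g j).coeff k = 0 := by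
  induction j with
  | zero => intro k hk; omega
  | succ j ih =>
    intro k hk
    rw [g_succ, coeff_add, coeff_X3_mul, coeff_X_mul']
    rcases Nat.lt_or_ge k 3 with h3 | h3
    · rw [if_neg (by omega)]
      split
      · rw [ih _ (by omega)]; ring
      · ring
    · rw [if_pos h3, if_pos (by omega), coeff_derivative]
      have h1 : k - 3 + 1 = k - 2 := by omega
      rw [h1, ih _ (by omega), ih _ (by omega)]; ring

lemma g_coeff_gt (j : ℕ) : ∀ k, 2 * j ≤ k → 1 ≤ k → (g j).coeff k = 0 := by
  induction j with
  | zero =>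
    intro k hk h1
    show (1 : Polynomial ℤ).coeff k = 0
    rw [coeff_one, if_neg (by omega)]
  | succ j ih =>
    intro k hk h1
    rw [g_rec j k (by omega)]
    have h2 : (g j).coeff (k - 1) = 0 := ih _ (by omega) (by omega)
    rcases Nat.lt_or_ge (k - 2) 1 with h0 | h0
    · have : k = 2 := by omega
      subst this
      rw [h2]
      norm_num
    · rw [ih _ (by omega) h0, h2]; ring

lemma g_key (j : ℕ) (hj : 1 ≤ j) : ∀ k, j ≤ k → k ≤ 2 * j →
    (2 * (j : ℤ) - k) * ((k : ℤ) - 1) * (g j).coeff (k - 1)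
      = 2 * ((k : ℤ) - j) * (g j).coeff k := by
  induction j with
  | zero => omega
  | succ j ih =>
    intro k hk1 hk2
    rcases Nat.eq_or_lt_of_le hk1 with rfl | hlo
    · simp only [Nat.add_sub_cancel]
      rw [g_coeff_lt (j + 1) j (by omega)]
      push_cast; ring
    rcases Nat.eq_or_lt_of_le hk2 with rfl | hhi
    · rw [g_coeff_gt (j + 1) (2 * (j + 1)) (le_refl _) (by omega)]
      push_cast; ring
    -- now j + 2 ≤ k ≤ 2j + 1, hence j ≥ 1
    rcases Nat.eq_zero_or_pos j with rfl | hj'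
    · omega
    obtain ⟨a, rfl⟩ : ∃ a, k = a + 3 := ⟨k - 3, by omega⟩
    have e1 := g_rec j (a + 2) (by omega)
    have e2 := g_rec j (a + 3) (by omega)
    have H1 := ih hj' (a + 1) (by omega) (by omega)
    have H2 := ih hj' (a + 2) (by omega) (by omega)
    simp only [Nat.add_sub_cancel] at H1 H2
    rw [show a + 2 - 2 = a from rfl, show a + 2 - 1 = a + 1 from rfl] at e1
    rw [show a + 3 - 2 = a + 1 from rfl, show a + 3 - 1 = a + 2 from rfl] at e2
    rw [show a + 3 - 1 = a + 2 from rfl]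
    push_cast at e1 e2 H1 H2 ⊢
    linear_combination (2 * (j : ℤ) - (a : ℤ) - 1) * ((a : ℤ) + 2) * e1
      - 2 * ((a : ℤ) + 2 - (j : ℤ)) * e2 + ((a : ℤ) + 2) * H1 + H2

theorem g_coeff_recurrences (j : ℕ) (hj : 1 ≤ j) :
    (∀ k : ℕ, j + 1 ≤ k → k ≤ 2 * j - 1 →
      (g (j + 1)).coeff (k + 1) = ((k : ℤ) - 1) * (g j).coeff (k - 1) + (g j).coeff k) ∧
    (g (j + 1)).coeff (2 * j + 1) = (2 * (j : ℤ) - 1) * (g j).coeff (2 * j - 1) ∧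
    (∀ k : ℕ, j + 1 ≤ k → k ≤ 2 * j - 1 →
      2 * (j : ℤ) * (g (j + 1)).coeff (k + 1) =
        ((k : ℤ) - 1) * (k : ℤ) * (g j).coeff (k - 1) + 2 * (k : ℤ) * (g j).coeff k) := by
  have part1 : ∀ k : ℕ, j + 1 ≤ k → k ≤ 2 * j - 1 →
      (g (j + 1)).coeff (k + 1) = ((k : ℤ) - 1) * (g j).coeff (k - 1) + (g j).coeff k := by
    intro k hk1 hk2
    have := g_rec j (k + 1) (by omega)
    rw [show k + 1 - 2 = k - 1 from by omega, show k + 1 - 1 = k from by omega] at this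
    rw [this]
    push_cast
    ring
  refine ⟨part1, ?_, ?_⟩
  · have := g_rec j (2 * j + 1) (by omega)
    rw [show 2 * j + 1 - 2 = 2 * j - 1 from by omega,
      show 2 * j + 1 - 1 = 2 * j from by omega,
      g_coeff_gt j (2 * j) (le_refl _) (by omega)] at this
    rw [this]
    push_cast
    ring
  · intro k hk1 hk2
    have e := part1 k hk1 hk2
    have H := g_key j hj k (by omega) (by omega)
    linear_combination 2 * (j : ℤ) * e + H
end

section
/- For all integers j ≥ 0 and ν ≥ 0 and every r > 0, the function ψ_j(r) = e^{−r}·g_j(1/r) satisfies ψ_j″(r) + (2ν/r)·ψ_j′(r) − ψ_j(r) = 2(j − ν)·ψ_{j+1}(r). In particular, taking j = ν, ψ_ν″(r) + (2ν/r)·ψ_ν′(r) − ψ_ν(r) = 0 for all r > 0. -/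
open Polynomial

/-- `ψ_j(r) = e^{-r} g_j(1/r)`. -/
noncomputable def psi (j : ℕ) (r : ℝ) : ℝ := Real.exp (-r) * (Polynomial.aeval r⁻¹) (g j)

/-!
Differentiating `e^{-r} p(1/r)` gives `-r e^{-r} (t³p' + tp)(1/r)`, so the recursion defining `g`
says exactly that `ψ_j' = -r ψ_{j+1}`. The Bessel identity then reduces to the three-term recurrence
`r² ψ_{j+2} = (2j+1) ψ_{j+1} + ψ_j`, i.e. `g_{j+2} = (2j+1) t² g_{j+1} + t² g_j`, which follows from
the second-order equation `t³ g_j'' + 2(t + t² - j t²) g_j' = 2j g_j`, proved by induction on `j`.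
-/

theorem g_differential_equation : ∀ j : ℕ,
    X ^ 3 * derivative (derivative (g j)) +
        2 * (X + X ^ 2 - (j : ℤ[X]) * X ^ 2) * derivative (g j) = 2 * (j : ℤ[X]) * g j
  | 0 => by simp [g]
  | j + 1 => by
    have ih := g_differential_equation j
    have ih' := congrArg derivative ih
    simp only [g, derivative_mul, derivative_add, derivative_sub, derivative_X_pow,
      derivative_X, derivative_natCast, derivative_ofNat, derivative_one, C_eq_natCast] at ih' ⊢
    push_cast at ih ih' ⊢
    linear_combination (X ^ 2 + X) * ih + X ^ 3 * ih'

theorem g_add_two (j : ℕ) : g (j + 2) = (2 * (j : ℤ[X]) + 1) * X ^ 2 * g (j + 1) + X ^ 2 * g j := by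
  simp only [g, derivative_mul, derivative_add, derivative_X_pow, derivative_X, C_eq_natCast]
  push_cast
  linear_combination X ^ 3 * g_differential_equation j

theorem hasDerivAt_exp_neg_mul_aeval_inv (p : ℤ[X]) {r : ℝ} (hr : r ≠ 0) :
    HasDerivAt (fun x ↦ Real.exp (-x) * aeval x⁻¹ p)
      (-(r * (Real.exp (-r) * aeval r⁻¹ (X ^ 3 * derivative p + X * p)))) r := by
  have hexp : HasDerivAt (fun x : ℝ ↦ Real.exp (-x)) (-Real.exp (-r)) r := by
    simpa using (hasDerivAt_neg r).exp
  have hpoly : HasDerivAt (fun x : ℝ ↦ aeval x⁻¹ p) (aeval r⁻¹ (derivative p) * -(r ^ 2)⁻¹) r :=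
    (p.hasDerivAt_aeval r⁻¹).comp r (hasDerivAt_inv hr)
  refine (hexp.fun_mul hpoly).congr_deriv ?_
  simp only [map_add, map_mul, map_pow, aeval_X]
  field_simp
  ring

theorem hasDerivAt_psi (j : ℕ) {r : ℝ} (hr : r ≠ 0) :
    HasDerivAt (psi j) (-(r * psi (j + 1) r)) r :=
  hasDerivAt_exp_neg_mul_aeval_inv (g j) hr

theorem deriv_deriv_psi (j : ℕ) {r : ℝ} (hr : r ≠ 0) :
    deriv (deriv (psi j)) r = -psi (j + 1) r + r ^ 2 * psi (j + 2) r := by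
  have hderiv : deriv (psi j) =ᶠ[nhds r] fun x ↦ -(x * psi (j + 1) x) := by
    filter_upwards [isOpen_ne.mem_nhds hr] with x hx
    exact (hasDerivAt_psi j hx).deriv
  rw [hderiv.deriv_eq, (((hasDerivAt_id' r).fun_mul (hasDerivAt_psi (j + 1) hr)).fun_neg).deriv]
  ring

theorem sq_mul_psi_add_two (j : ℕ) {r : ℝ} (hr : r ≠ 0) :
    r ^ 2 * psi (j + 2) r = (2 * j + 1) * psi (j + 1) r + psi j r := by
  rw [psi, g_add_two]
  simp only [psi, map_add, map_mul, map_pow, map_natCast, map_ofNat, map_one, aeval_X]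
  field_simp

theorem psi_bessel (j ν : ℕ) {r : ℝ} (hr : r ≠ 0) :
    deriv (deriv (psi j)) r + (2 * (ν : ℝ) / r) * deriv (psi j) r - psi j r =
      2 * ((j : ℝ) - ν) * psi (j + 1) r := by
  rw [deriv_deriv_psi j hr, (hasDerivAt_psi j hr).deriv]
  field_simp
  linear_combination sq_mul_psi_add_two j hr

theorem psi_bessel_identity (j ν : ℕ) (r : ℝ) (hr : 0 < r) :
    (deriv (deriv (psi j)) r + (2 * (ν : ℝ) / r) * deriv (psi j) r - psi j r =
        2 * ((j : ℝ) - ν) * psi (j + 1) r) ∧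
      (deriv (deriv (psi ν)) r + (2 * (ν : ℝ) / r) * deriv (psi ν) r - psi ν r = 0) := by
  refine ⟨psi_bessel j ν hr.ne', ?_⟩
  rw [psi_bessel ν ν hr.ne', sub_self, mul_zero, zero_mul]
end
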